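/- Let G be a centerless group with the weakly Howson property. Then the following are equivalent: (i) for every m ≥ 1, the group G × ℤ^m has the finitely generated fixed subgroup property of automorphisms; (ii) G has the finitely generated fixed subgroup property of automorphisms and the derived subgroup [G, G] is finitely generated. -/

import Mathlib

/-- The fixed subgroup of an endomorphism of a group. -/
def fixedSubgroup {G : Type*} [Group G] (φ : G →* G) : Subgroup G where
  carrier := {g | φ g = g}
  one_mem' := map_one φ
  mul_mem' := by
    intro a b ha hb
    simp only [Set.mem_setOf_eq, map_mul] at *
    rw [ha, hb]
  inv_mem' := by
    intro a ha
    simp only [Set.mem_setOf_eq, map_inv] at *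
    rw [ha]

/-- A group has the weakly Howson property if the intersection of any two finitely
generated subgroups, one of which is normal, is finitely generated. -/
def WeaklyHowson (G : Type*) [Group G] : Prop :=
  ∀ H K : Subgroup G, H.Normal → H.FG → K.FG → (H ⊓ K).FG

/-!
Forward direction: `Fix (ψ × id) = Fix ψ × ℤᵐ`, and for `f : G →* ℤᵐ` the shear
`(g, a) ↦ (g, f g * a)` fixes exactly `ker f × ℤᵐ`; so `Fix ψ` and every such `ker f` are
finitely generated. By the structure theorem some `f` kills `[G, G]` with `ker f / [G, G]` finite,
so `[G, G]` is finitely generated too.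

Backward direction: as `Z(G × ℤᵐ) = 1 × ℤᵐ`, an automorphism `φ` induces an automorphism `α`
of `G`, and the projection of `Fix φ` to `G` is `L ∩ Fix α` for some `L ⊇ [G, G]`. Such an `L`
is normal and finitely generated (`[G, G]` and `Gᵃᵇ` are), so weak Howson makes the projection
finitely generated, while its kernel lies in `ℤᵐ`.
-/
namespace Subgroup

variable {G H : Type*} [Group G] [Group H]

theorem FG.map {K : Subgroup G} (hK : K.FG) (f : G →* H) : (K.map f).FG := by
  obtain ⟨S, rfl, hS⟩ := (fg_iff K).mp hK
  exact (fg_iff _).mpr ⟨f '' S, (MonoidHom.map_closure f S).symm, hS.image f⟩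

theorem fg_of_fg_map_of_fg_inf_ker (f : G →* H) {K : Subgroup G} (hmap : (K.map f).FG)
    (hker : (K ⊓ f.ker).FG) : K.FG := by
  obtain ⟨S, hS, hSfin⟩ := (fg_iff _).mp hker
  obtain ⟨T, hTK, hTfin, hT⟩ := Set.exists_subset_image_finite_and.mp <|
    ((fg_iff _).mp hmap).imp fun T ⟨hT, hTfin⟩ => ⟨hT ▸ subset_closure, hTfin, hT⟩
  have hSK : S ⊆ K := subset_closure.trans (hS.trans_le inf_le_left)
  refine (fg_iff K).mpr ⟨S ∪ T, le_antisymm ?_ fun k hk => ?_, hSfin.union hTfin⟩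
  · exact (closure_le K).mpr (Set.union_subset hSK hTK)
  · obtain ⟨c, hcT, hck⟩ : f k ∈ (closure T).map f := by
      rw [MonoidHom.map_closure, hT]; exact mem_map_of_mem f hk
    have hcK : c⁻¹ * k ∈ closure S := by
      rw [hS]
      exact mem_inf.mpr ⟨mul_mem (inv_mem ((closure_le K).mpr hTK hcT)) hk, by simp [hck]⟩
    simpa using mul_mem (closure_mono Set.subset_union_right hcT)
      (closure_mono Set.subset_union_left hcK)

theorem fg_of_commGroup {A : Type*} [CommGroup A] [Group.FG A] (K : Subgroup A) : K.FG := by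
  have hK := IsNoetherian.noetherian (AddSubgroup.toIntSubmodule K.toAddSubgroup)
  rw [Submodule.fg_iff_addSubgroup_fg] at hK
  exact (fg_iff_add_fg K).mpr hK

theorem fg_of_le_of_relIndex_ne_zero {N K : Subgroup G} (hK : K.FG) (hNK : N ≤ K)
    (hN : N.relIndex K ≠ 0) : N.FG := by
  have : Group.FG K := (Group.fg_iff_subgroup_fg K).mpr hK
  have : (N.subgroupOf K).FiniteIndex := ⟨hN⟩
  have hfg := ((Group.fg_iff_subgroup_fg _).mp (fg_of_index_ne_zero (N.subgroupOf K))).map K.subtype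
  rwa [subgroupOf_map_subtype, inf_eq_left.mpr hNK] at hfg

theorem fg_of_commutator_le [Group.FG G] (hG' : (_root_.commutator G).FG) {L : Subgroup G}
    (hL : _root_.commutator G ≤ L) : L.FG := by
  have : Group.FG (Abelianization G) := QuotientGroup.fg _
  refine fg_of_fg_map_of_fg_inf_ker Abelianization.of (fg_of_commGroup _) ?_
  rwa [Abelianization.ker_of, inf_eq_right.mpr hL]

theorem map_fst_prod (K : Subgroup G) (L : Subgroup H) :
    (K.prod L).map (MonoidHom.fst G H) = K := by
  ext g
  exact ⟨fun ⟨x, hx, hxg⟩ => hxg ▸ hx.1, fun hg => ⟨(g, 1), ⟨hg, L.one_mem⟩, rfl⟩⟩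

theorem fg_of_fg_map_fst {Z : Type*} [CommGroup Z] [Group.FG Z] (K : Subgroup (G × Z))
    (hK : (K.map (MonoidHom.fst G Z)).FG) : K.FG := by
  refine fg_of_fg_map_of_fg_inf_ker _ hK ?_
  have hle : K ⊓ (MonoidHom.fst G Z).ker ≤ (MonoidHom.inr G Z).range :=
    fun x hx => ⟨x.2, Prod.ext hx.2.symm rfl⟩
  rw [← map_comap_eq_self hle]
  exact (fg_of_commGroup _).map _

end Subgroup

theorem CommGroup.exists_monoidHom_pi_int_finite_ker (A : Type*) [CommGroup A] [Group.FG A] :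
    ∃ m, ∃ g : A →* Multiplicative (Fin m → ℤ), Finite g.ker := by
  obtain ⟨ι, j, _, _, p, hp, e, ⟨eqv⟩⟩ := CommGroup.equiv_free_prod_prod_multiplicative_zmod A
  have : ∀ i, NeZero (p i ^ e i) := fun i => ⟨pow_ne_zero _ (hp i).ne_zero⟩
  let toPiInt : (j → Multiplicative ℤ) ≃* Multiplicative (Fin (Fintype.card j) → ℤ) :=
    (MulEquiv.arrowCongr (Fintype.equivFin j) (MulEquiv.refl _)).trans
      (MulEquiv.piMultiplicative _).symm
  refine ⟨_, toPiInt.toMonoidHom.comp ((MonoidHom.fst _ _).comp eqv.toMonoidHom), ?_⟩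
  refine Finite.of_injective (fun x => (eqv x).2) fun x y hxy => ?_
  have hfst : ∀ z : (toPiInt.toMonoidHom.comp ((MonoidHom.fst _ _).comp eqv.toMonoidHom)).ker,
      (eqv z).1 = 1 := fun z => toPiInt.map_eq_one_iff.mp z.2
  exact Subtype.ext <| eqv.injective <| Prod.ext ((hfst x).trans (hfst y).symm) hxy

theorem commutator_fg_of_forall_ker_fg {G : Type*} [Group G]
    (h : ∀ m (f : G →* Multiplicative (Fin m → ℤ)), f.ker.FG) : (commutator G).FG := by
  have : Group.FG G := Group.fg_def.mpr (by simpa using h 0 1)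
  have : Group.FG (Abelianization G) := QuotientGroup.fg _
  obtain ⟨m, g, hg⟩ := CommGroup.exists_monoidHom_pi_int_finite_ker (Abelianization G)
  have hle : commutator G ≤ (g.comp Abelianization.of).ker := by
    rw [← Abelianization.ker_of, ← MonoidHom.comap_ker]; exact Subgroup.comap_mono bot_le
  refine Subgroup.fg_of_le_of_relIndex_ne_zero (h m _) hle ?_
  -- `ker (g ∘ of) ⧸ [G, G]` embeds in the finite group `ker g`
  have : Finite ((g.comp Abelianization.of).ker.map Abelianization.of) := by
    rw [← MonoidHom.comap_ker]
    exact Finite.Set.subset (g.ker : Set _) (Subgroup.map_comap_le _ _)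
  rw [← Abelianization.ker_of, ← MonoidHom.comap_bot, Subgroup.relIndex_comap,
    Subgroup.relIndex_bot_left]
  exact Nat.card_pos.ne'

@[simp]
theorem mem_fixedSubgroup {G : Type*} [Group G] {φ : G →* G} {g : G} :
    g ∈ fixedSubgroup φ ↔ φ g = g :=
  Iff.rfl

section Product

variable {G H : Type*} [Group G] [Group H]

theorem fixedSubgroup_refl : fixedSubgroup (MulEquiv.refl G).toMonoidHom = ⊤ := by
  ext; simp

theorem fixedSubgroup_prodCongr (φ : G ≃* G) (ψ : H ≃* H) :
    fixedSubgroup (φ.prodCongr ψ).toMonoidHom =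
      (fixedSubgroup φ.toMonoidHom).prod (fixedSubgroup ψ.toMonoidHom) := by
  ext; simp [Prod.ext_iff, Subgroup.mem_prod, MulEquiv.prodCongr]

end Product

section Shear

variable {G Z : Type*} [Group G] [CommGroup Z]

def shear (f : G →* Z) : G × Z ≃* G × Z where
  toFun x := (x.1, f x.1 * x.2)
  invFun x := (x.1, (f x.1)⁻¹ * x.2)
  left_inv x := by simp
  right_inv x := by simp
  map_mul' x y := Prod.ext rfl <| by
    simp only [Prod.snd_mul, Prod.fst_mul, map_mul]; exact mul_mul_mul_comm ..

theorem fixedSubgroup_shear (f : G →* Z) :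
    fixedSubgroup (shear f).toMonoidHom = f.ker.prod ⊤ := by
  ext; simp [shear, Subgroup.mem_prod, Prod.ext_iff]

end Shear

namespace Centerless

variable {G Z : Type*} [Group G] [CommGroup Z]

theorem fst_map_inr_eq_one (hc : Subgroup.center G = ⊥) (φ : G × Z ≃* G × Z) (a : Z) :
    (φ (1, a)).1 = 1 := by
  have hcenter : ∀ x : G × Z, x ∈ Subgroup.center (G × Z) ↔ x.1 = 1 := by
    simp [Subgroup.center_prod, hc, Subgroup.mem_prod, CommGroup.center_eq_top]
  exact (hcenter _).mp <| Subgroup.characteristic_iff_le_comap.mp inferInstance φ <|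
    (hcenter _).mpr rfl

theorem fst_map_eq (hc : Subgroup.center G = ⊥) (φ : G × Z ≃* G × Z) (x : G × Z) :
    (φ x).1 = (φ (x.1, 1)).1 := by
  conv_lhs => rw [show x = (x.1, 1) * (1, x.2) by simp]
  rw [map_mul, Prod.fst_mul, fst_map_inr_eq_one hc, mul_one]

def fstHom (φ : G × Z ≃* G × Z) : G →* G :=
  (MonoidHom.fst G Z).comp (φ.toMonoidHom.comp (MonoidHom.inl G Z))

/-- `φ` preserves the centre `1 × Z`, so it descends to `G ≅ (G × Z) ⧸ (1 × Z)`. -/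
def fstAut (hc : Subgroup.center G = ⊥) (φ : G × Z ≃* G × Z) : G ≃* G :=
  MonoidHom.toMulEquiv (fstHom φ) (fstHom φ.symm)
    (by ext g; simp [fstHom, ← fst_map_eq hc φ.symm])
    (by ext g; simp [fstHom, ← fst_map_eq hc φ])

theorem map_fst_fixedSubgroup (hc : Subgroup.center G = ⊥) (φ : G × Z ≃* G × Z) :
    ∃ L : Subgroup G, commutator G ≤ L ∧
      (fixedSubgroup φ.toMonoidHom).map (MonoidHom.fst G Z) =
        L ⊓ fixedSubgroup (fstAut hc φ).toMonoidHom := by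
  let f : G →* Z := (MonoidHom.snd G Z).comp (φ.toMonoidHom.comp (MonoidHom.inl G Z))
  let M : Z →* Z := (MonoidHom.snd G Z).comp (φ.toMonoidHom.comp (MonoidHom.inr G Z))
  have hφ : ∀ g a, φ (g, a) = (fstAut hc φ g, f g * M a) := by
    intro g a
    rw [show (g, a) = (g, 1) * (1, a) by simp, map_mul]
    ext <;> simp [fstAut, fstHom, fst_map_inr_eq_one hc, f, M]
  refine ⟨(MonoidHom.id Z / M).range.comap f,
    (Abelianization.commutator_subset_ker f).trans (Subgroup.comap_mono bot_le), ?_⟩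
  ext g
  simp only [Subgroup.mem_map, mem_fixedSubgroup, Subgroup.mem_inf, Subgroup.mem_comap,
    MonoidHom.mem_range, MulEquiv.coe_toMonoidHom, MonoidHom.div_apply, MonoidHom.id_apply]
  constructor
  · rintro ⟨⟨g, a⟩, hfix, rfl⟩
    obtain ⟨hα, hZ⟩ : fstAut hc φ g = g ∧ f g * M a = a := by rwa [hφ, Prod.ext_iff] at hfix
    exact ⟨⟨a, div_eq_iff_eq_mul.mpr hZ.symm⟩, hα⟩
  · rintro ⟨⟨a, ha⟩, hα⟩
    exact ⟨(g, a), by rw [hφ, hα, ← ha, div_mul_cancel], rfl⟩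

end Centerless

theorem fixedSubgroup_fg_of_centerless {G Z : Type*} [Group G] [CommGroup Z] [Group.FG Z]
    (hc : Subgroup.center G = ⊥) (hw : WeaklyHowson G)
    (hfix : ∀ ψ : G ≃* G, (fixedSubgroup ψ.toMonoidHom).FG) (hG' : (commutator G).FG)
    (φ : G × Z ≃* G × Z) : (fixedSubgroup φ.toMonoidHom).FG := by
  have : Group.FG G := by rw [Group.fg_def, ← fixedSubgroup_refl]; exact hfix _
  obtain ⟨L, hL, hmap⟩ := Centerless.map_fst_fixedSubgroup hc φ
  refine Subgroup.fg_of_fg_map_fst _ ?_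
  rw [hmap]
  exact hw L _ (.of_commutator_le _ hL) (Subgroup.fg_of_commutator_le hG' hL) (hfix _)

/-- For a centerless group `G` with the weakly Howson property, `G × ℤᵐ` has FGFP_a
for every `m ≥ 1` iff `G` has FGFP_a and `[G, G]` is finitely generated. -/
theorem fgfp_prod_int_pow_iff {G : Type*} [Group G]
    (hc : Subgroup.center G = ⊥) (hw : WeaklyHowson G) :
    (∀ m : ℕ, 1 ≤ m →
        ∀ φ : (G × Multiplicative (Fin m → ℤ)) ≃* (G × Multiplicative (Fin m → ℤ)),
          (fixedSubgroup φ.toMonoidHom).FG) ↔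
      ((∀ ψ : G ≃* G, (fixedSubgroup ψ.toMonoidHom).FG) ∧ (commutator G).FG) := by
  constructor
  · intro hi
    have hfix : ∀ ψ : G ≃* G, (fixedSubgroup ψ.toMonoidHom).FG := fun ψ => by
      have h := (hi 1 le_rfl (ψ.prodCongr (.refl _))).map (MonoidHom.fst _ _)
      rwa [fixedSubgroup_prodCongr, Subgroup.map_fst_prod] at h
    refine ⟨hfix, commutator_fg_of_forall_ker_fg fun m f => ?_⟩
    rcases m.eq_zero_or_pos with rfl | hm
    · rw [show f = 1 from MonoidHom.ext fun _ => Subsingleton.elim _ _, MonoidHom.ker_one,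
        ← fixedSubgroup_refl]
      exact hfix _
    · have h := (hi m hm (shear f)).map (MonoidHom.fst _ _)
      rwa [fixedSubgroup_shear, Subgroup.map_fst_prod] at h
  · rintro ⟨hfix, hG'⟩ m - φ
    exact fixedSubgroup_fg_of_centerless hc hw hfix hG' φ
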